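/- arXiv:1807.05891 — 3 statements merged into one kernel-verified Lean document; each statement's English description precedes it below -/
import Mathlib

section
/- Let 𝔜 be the Leibniz algebra of pairs (X_t, α_t) as above and define φ : 𝔜 → Γ(TM ⊕ T*M) by φ(X_t, α_t) = (X_1, ∫₀¹ α_t dt). Then φ is a morphism of Leibniz algebras onto the sections of the standard Courant algebroid with Dorfman bracket [(X,ξ),(Y,η)] = ([X,Y], L_X η − i_Y dξ); i.e. φ([(X_t,α_t),(Y_t,β_t)]) = [φ(X_t,α_t), φ(Y_t,β_t)], and its kernel equals 𝔍 = {(X_t,α_t) : X_1 = 0, ∫₀¹ α_s ds = 0}. -/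
/-- The bracket `[(X_t,α_t),(Y_t,β_t)] = ([X₁,Y_t], L_{X₁}β_t − i_{Ẏ_t} d∫₀¹α_s ds)`. -/
noncomputable def brk {V Ω1 Ω2 : Type*}
    [NormedAddCommGroup V] [NormedSpace ℝ V]
    [NormedAddCommGroup Ω1] [NormedSpace ℝ Ω1]
    [NormedAddCommGroup Ω2] [NormedSpace ℝ Ω2]
    (br : V →L[ℝ] V →L[ℝ] V) (L1 : V →L[ℝ] Ω1 →L[ℝ] Ω1)
    (ι : V →L[ℝ] Ω2 →L[ℝ] Ω1) (d : Ω1 →L[ℝ] Ω2)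
    (a b : (ℝ → V) × (ℝ → Ω1)) : (ℝ → V) × (ℝ → Ω1) :=
  (fun t => br (a.1 1) (b.1 t),
   fun t => L1 (a.1 1) (b.2 t) - ι (deriv b.1 t) (d (∫ s in (0:ℝ)..1, a.2 s)))

/-- The Dorfman bracket `[(X,ξ),(Y,η)] = ([X,Y], L_X η − i_Y dξ)`. -/
noncomputable def dor {V Ω1 Ω2 : Type*}
    [NormedAddCommGroup V] [NormedSpace ℝ V]
    [NormedAddCommGroup Ω1] [NormedSpace ℝ Ω1]
    [NormedAddCommGroup Ω2] [NormedSpace ℝ Ω2]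
    (br : V →L[ℝ] V →L[ℝ] V) (L1 : V →L[ℝ] Ω1 →L[ℝ] Ω1)
    (ι : V →L[ℝ] Ω2 →L[ℝ] Ω1) (d : Ω1 →L[ℝ] Ω2)
    (a b : V × Ω1) : V × Ω1 :=
  (br a.1 b.1, L1 a.1 b.2 - ι b.1 (d a.2))

/-- The map `φ(X_t,α_t) = (X₁, ∫₀¹ α_t dt)`. -/
noncomputable def phiMap {V Ω1 : Type*}
    [NormedAddCommGroup V] [NormedSpace ℝ V]
    [NormedAddCommGroup Ω1] [NormedSpace ℝ Ω1]
    (a : (ℝ → V) × (ℝ → Ω1)) : V × Ω1 :=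
  (a.1 1, ∫ s in (0:ℝ)..1, a.2 s)

/-- `φ(X_t,α_t) = (X₁, ∫₀¹ α_t dt)` is a morphism of Leibniz brackets onto the standard
Courant algebroid (Dorfman bracket), with kernel `𝔍 = {(X_t,α_t) : X₁ = 0, ∫₀¹α_s ds = 0}`. -/
theorem stmt7 {V Ω1 Ω2 : Type*}
    [NormedAddCommGroup V] [NormedSpace ℝ V] [CompleteSpace V]
    [NormedAddCommGroup Ω1] [NormedSpace ℝ Ω1] [CompleteSpace Ω1]
    [NormedAddCommGroup Ω2] [NormedSpace ℝ Ω2]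
    (br : V →L[ℝ] V →L[ℝ] V) (L1 : V →L[ℝ] Ω1 →L[ℝ] Ω1)
    (ι : V →L[ℝ] Ω2 →L[ℝ] Ω1) (d : Ω1 →L[ℝ] Ω2) :
    (∀ a b : (ℝ → V) × (ℝ → Ω1),
      ContDiff ℝ (⊤ : ℕ∞) a.1 → ContDiff ℝ (⊤ : ℕ∞) a.2 → a.1 0 = 0 →
      ContDiff ℝ (⊤ : ℕ∞) b.1 → ContDiff ℝ (⊤ : ℕ∞) b.2 → b.1 0 = 0 →
      phiMap (brk br L1 ι d a b) = dor br L1 ι d (phiMap a) (phiMap b)) ∧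
    (∀ a : (ℝ → V) × (ℝ → Ω1),
      phiMap a = (0, 0) ↔ (a.1 1 = 0 ∧ (∫ s in (0:ℝ)..1, a.2 s) = 0)) := by
  constructor
  · intro a b ha1 ha2 ha0 hb1 hb2 hb0
    have hb2i : IntervalIntegrable b.2 MeasureTheory.volume 0 1 :=
      (hb2.continuous.intervalIntegrable 0 1)
    have hderiv : ∀ t, HasDerivAt b.1 (deriv b.1 t) t := fun t =>
      ((hb1.differentiable (by simp)) t).hasDerivAt
    have hdc : Continuous (deriv b.1) := (hb1.continuous_deriv (by simp))
    have hderivi : IntervalIntegrable (deriv b.1) MeasureTheory.volume 0 1 :=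
      hdc.intervalIntegrable 0 1
    have hftc : (∫ t in (0:ℝ)..1, deriv b.1 t) = b.1 1 - b.1 0 :=
      intervalIntegral.integral_deriv_eq_sub (fun t _ => (hb1.differentiable (by simp)) t) hderivi
    unfold phiMap brk dor
    refine Prod.ext rfl ?_
    simp only
    set w := d (∫ s in (0:ℝ)..1, a.2 s) with hw
    set T : V →L[ℝ] Ω1 := (ContinuousLinearMap.flip ι) w with hT
    have h1 : (∫ t in (0:ℝ)..1, L1 (a.1 1) (b.2 t) - ι (deriv b.1 t) w)
        = (∫ t in (0:ℝ)..1, L1 (a.1 1) (b.2 t)) - ∫ t in (0:ℝ)..1, ι (deriv b.1 t) w := by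
      apply intervalIntegral.integral_sub
      · exact ((L1 (a.1 1)).continuous.comp hb2.continuous).intervalIntegrable 0 1
      · exact (T.continuous.comp hdc).intervalIntegrable 0 1
    rw [h1]
    have h2 : (∫ t in (0:ℝ)..1, L1 (a.1 1) (b.2 t)) = L1 (a.1 1) (∫ t in (0:ℝ)..1, b.2 t) :=
      (L1 (a.1 1)).intervalIntegral_comp_comm hb2i
    have h3 : (∫ t in (0:ℝ)..1, ι (deriv b.1 t) w) = ι (b.1 1) w := by
      have : (∫ t in (0:ℝ)..1, T (deriv b.1 t)) = T (∫ t in (0:ℝ)..1, deriv b.1 t) :=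
        T.intervalIntegral_comp_comm hderivi
      simp only [hT, ContinuousLinearMap.flip_apply] at this
      rw [this, hftc, hb0, sub_zero]
    rw [h2, h3]
  · intro a
    simp [phiMap, Prod.ext_iff]
end

section
/- Define s : Γ(TM ⊕ T*M) → 𝔜 by s(X, α) = (t ↦ tX, α) (i.e. the family of vector fields X_t = tX and the constant family of 1-forms α). Then s is a section of φ(X_t,α_t) = (X_1, ∫₀¹α_t dt) and is compatible with the brackets: s([(X,ξ),(Y,η)]_{Dorfman}) = [s(X,ξ), s(Y,η)]_𝔜. -/
/-- The section `s(X,α) = (t ↦ tX, α)`. -/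
def sec {V Ω1 : Type*}
    [NormedAddCommGroup V] [NormedSpace ℝ V]
    [NormedAddCommGroup Ω1] [NormedSpace ℝ Ω1]
    (X : V) (α : Ω1) : (ℝ → V) × (ℝ → Ω1) :=
  (fun t : ℝ => t • X, fun _ : ℝ => α)

section

variable {V Ω1 Ω2 : Type*}
  [NormedAddCommGroup V] [NormedSpace ℝ V]
  [NormedAddCommGroup Ω1] [NormedSpace ℝ Ω1]
  [NormedAddCommGroup Ω2] [NormedSpace ℝ Ω2]

@[simp]
lemma sec_fst_one (X : V) (α : Ω1) : (sec X α).1 1 = X :=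
  one_smul ℝ X

@[simp]
lemma integral_sec_snd [CompleteSpace Ω1] (X : V) (α : Ω1) :
    ∫ s in (0:ℝ)..1, (sec X α).2 s = α := by
  simp [sec]

lemma deriv_sec_fst (X : V) (α : Ω1) : deriv (sec X α).1 = fun _ => X := by
  funext t
  simpa [sec] using ((hasDerivAt_id t).smul_const X).deriv

lemma sec_dor_eq_brk [CompleteSpace Ω1] (br : V →L[ℝ] V →L[ℝ] V) (L1 : V →L[ℝ] Ω1 →L[ℝ] Ω1)
    (ι : V →L[ℝ] Ω2 →L[ℝ] Ω1) (d : Ω1 →L[ℝ] Ω2) (X Y : V) (ξ η : Ω1) :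
    sec (dor br L1 ι d (X, ξ) (Y, η)).1 (dor br L1 ι d (X, ξ) (Y, η)).2
      = brk br L1 ι d (sec X ξ) (sec Y η) := by
  rw [brk, deriv_sec_fst, sec_fst_one, integral_sec_snd]
  ext t
  · simp [sec, dor]
  · rfl

end

theorem stmt8_general {V Ω1 Ω2 : Type*}
    [NormedAddCommGroup V] [NormedSpace ℝ V]
    [NormedAddCommGroup Ω1] [NormedSpace ℝ Ω1] [CompleteSpace Ω1]
    [NormedAddCommGroup Ω2] [NormedSpace ℝ Ω2]
    (br : V →L[ℝ] V →L[ℝ] V) (L1 : V →L[ℝ] Ω1 →L[ℝ] Ω1)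
    (ι : V →L[ℝ] Ω2 →L[ℝ] Ω1) (d : Ω1 →L[ℝ] Ω2) :
    ∀ (X Y : V) (ξ η : Ω1),
      (((sec X ξ).1 1 : V), (∫ s in (0:ℝ)..1, (sec X ξ).2 s : Ω1)) = (X, ξ) ∧
      sec (dor br L1 ι d (X, ξ) (Y, η)).1 (dor br L1 ι d (X, ξ) (Y, η)).2
        = brk br L1 ι d (sec X ξ) (sec Y η) :=
  fun X Y ξ η => ⟨by simp, sec_dor_eq_brk br L1 ι d X Y ξ η⟩

/-- `s(X,α) = (t ↦ tX, α)` is a section of `φ(X_t,α_t) = (X₁, ∫₀¹α_t dt)` compatible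
with the brackets: `s([(X,ξ),(Y,η)]_Dorfman) = [s(X,ξ), s(Y,η)]_𝔜`. -/
theorem stmt8 {V Ω1 Ω2 : Type*}
    [NormedAddCommGroup V] [NormedSpace ℝ V] [CompleteSpace V]
    [NormedAddCommGroup Ω1] [NormedSpace ℝ Ω1] [CompleteSpace Ω1]
    [NormedAddCommGroup Ω2] [NormedSpace ℝ Ω2]
    (br : V →L[ℝ] V →L[ℝ] V) (L1 : V →L[ℝ] Ω1 →L[ℝ] Ω1)
    (ι : V →L[ℝ] Ω2 →L[ℝ] Ω1) (d : Ω1 →L[ℝ] Ω2) :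
    ∀ (X Y : V) (ξ η : Ω1),
      (((sec X ξ).1 1 : V), (∫ s in (0:ℝ)..1, (sec X ξ).2 s : Ω1)) = (X, ξ) ∧
      sec (dor br L1 ι d (X, ξ) (Y, η)).1 (dor br L1 ι d (X, ξ) (Y, η)).2
        = brk br L1 ι d (sec X ξ) (sec Y η) :=
  stmt8_general br L1 ι d
end

section
/- Let D ⊆ TM ⊕ T*M be a subbundle whose space of sections is closed under the Dorfman bracket. For m ∈ M define A(D)_m = {(X_t, α_t) : [0,1] → T_mM ⊕ T_m*M smooth, X_0 = 0, and (Ẋ_t, α_t) ∈ D_m for all t}. Then the bracket [(X_t,α_t),(Y_t,β_t)] = ([X_1,Y_t], L_{X_1}β_t − i_{Ẏ_t} d∫₀¹α_s ds) of two sections of A(D) can be written as the integral ∫₀¹ ([Ẋ_s, Y_t], L_{Ẋ_s}β_t − i_{Ẏ_t} dα_s) ds of pointwise Dorfman brackets of sections of D, and hence sections of A(D) are closed under the bracket: [Γ(A(D)), Γ(A(D))] ⊆ Γ(A(D)). -/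
theorem pairInt {V Ω1 : Type*}
    [NormedAddCommGroup V] [NormedSpace ℝ V] [CompleteSpace V]
    [NormedAddCommGroup Ω1] [NormedSpace ℝ Ω1] [CompleteSpace Ω1]
    (f : ℝ → V) (g : ℝ → Ω1) (hf : Continuous f) (hg : Continuous g) :
    ∫ s in (0:ℝ)..1, (f s, g s) = (∫ s in (0:ℝ)..1, f s, ∫ s in (0:ℝ)..1, g s) := by
  have hint : IntervalIntegrable (fun s => (f s, g s)) MeasureTheory.volume 0 1 :=
    (hf.prodMk hg).intervalIntegrable (μ := MeasureTheory.volume) 0 1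
  have h1 := (ContinuousLinearMap.fst ℝ V Ω1).intervalIntegral_comp_comm hint
  have h2 := (ContinuousLinearMap.snd ℝ V Ω1).intervalIntegral_comp_comm hint
  exact Prod.ext (by simpa using h1.symm) (by simpa using h2.symm)

/-- For a Dirac-type fiber `D` (a closed subspace whose elements are closed under the
Dorfman bracket), the bracket of two elements of `A(D)` (families `(X_t,α_t)` with
`X₀ = 0` and `(Ẋ_t, α_t) ∈ D` for all `t`) can be written as the integral of pointwise
Dorfman brackets, and hence `A(D)` is closed under the bracket. -/
theorem stmt16 {V Ω1 Ω2 : Type*}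
    [NormedAddCommGroup V] [NormedSpace ℝ V] [CompleteSpace V]
    [NormedAddCommGroup Ω1] [NormedSpace ℝ Ω1] [CompleteSpace Ω1]
    [NormedAddCommGroup Ω2] [NormedSpace ℝ Ω2]
    (br : V →L[ℝ] V →L[ℝ] V) (L1 : V →L[ℝ] Ω1 →L[ℝ] Ω1)
    (ι : V →L[ℝ] Ω2 →L[ℝ] Ω1) (d : Ω1 →L[ℝ] Ω2)
    (D : Submodule ℝ (V × Ω1)) (hDcl : IsClosed (D : Set (V × Ω1)))
    (hDor : ∀ a b : V × Ω1, a ∈ D → b ∈ D → dor br L1 ι d a b ∈ D) :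
    ∀ a b : (ℝ → V) × (ℝ → Ω1),
      ContDiff ℝ (⊤ : ℕ∞) a.1 → ContDiff ℝ (⊤ : ℕ∞) a.2 → a.1 0 = 0 →
        (∀ t : ℝ, (deriv a.1 t, a.2 t) ∈ D) →
      ContDiff ℝ (⊤ : ℕ∞) b.1 → ContDiff ℝ (⊤ : ℕ∞) b.2 → b.1 0 = 0 →
        (∀ t : ℝ, (deriv b.1 t, b.2 t) ∈ D) →
      (∀ t : ℝ,
        ((brk br L1 ι d a b).1 t, (brk br L1 ι d a b).2 t)
          = ∫ s in (0:ℝ)..1,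
              ((br (deriv a.1 s) (b.1 t) : V),
               (L1 (deriv a.1 s) (b.2 t) - ι (deriv b.1 t) (d (a.2 s)) : Ω1))) ∧
      ((brk br L1 ι d a b).1 0 = 0 ∧
        ∀ t : ℝ, (deriv (brk br L1 ι d a b).1 t, (brk br L1 ι d a b).2 t) ∈ D) := by
  intro a b ha1 ha2 ha0 haD hb1 hb2 hb0 hbD
  have hda : Continuous (deriv a.1) := ha1.continuous_deriv (by simp)
  have hca2 : Continuous a.2 := ha2.continuous
  have hFTC : ∫ s in (0:ℝ)..1, deriv a.1 s = a.1 1 := by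
    rw [intervalIntegral.integral_deriv_eq_sub
      (fun x _ => ha1.differentiable (by simp) x) (hda.intervalIntegrable (μ := MeasureTheory.volume) 0 1), ha0, sub_zero]
  -- main computation: the bracket is an integral of pointwise Dorfman brackets
  have key : ∀ (w : V) (ω : Ω1) (z : V),
      (∫ s in (0:ℝ)..1,
        ((br (deriv a.1 s) w : V), (L1 (deriv a.1 s) ω - ι z (d (a.2 s)) : Ω1)))
      = (br (a.1 1) w, L1 (a.1 1) ω - ι z (d (∫ s in (0:ℝ)..1, a.2 s))) := by
    intro w ω z
    have hc1 : Continuous fun s => (br (deriv a.1 s) w : V) :=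
      ((br.flip w).continuous).comp hda
    have hc2 : Continuous fun s => (L1 (deriv a.1 s) ω : Ω1) :=
      ((L1.flip ω).continuous).comp hda
    have hc3 : Continuous fun s => (ι z (d (a.2 s)) : Ω1) :=
      (((ι z).comp d).continuous).comp hca2
    rw [pairInt _ (fun s => (L1 (deriv a.1 s) ω - ι z (d (a.2 s)) : Ω1)) hc1 (hc2.sub hc3)]
    refine Prod.ext ?_ ?_
    · have := (br.flip w).intervalIntegral_comp_comm (hda.intervalIntegrable (μ := MeasureTheory.volume) 0 1)
      simpa [hFTC] using this
    · rw [intervalIntegral.integral_sub (hc2.intervalIntegrable (μ := MeasureTheory.volume) 0 1) (hc3.intervalIntegrable (μ := MeasureTheory.volume) 0 1)]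
      have h1 := (L1.flip ω).intervalIntegral_comp_comm (hda.intervalIntegrable (μ := MeasureTheory.volume) 0 1)
      have h2 := ((ι z).comp d).intervalIntegral_comp_comm (hca2.intervalIntegrable (μ := MeasureTheory.volume) 0 1)
      simp only [ContinuousLinearMap.flip_apply, ContinuousLinearMap.comp_apply] at h1 h2
      rw [h1, h2, hFTC]
  refine ⟨fun t => (key (b.1 t) (b.2 t) (deriv b.1 t)).symm, ?_, ?_⟩
  · show br (a.1 1) (b.1 0) = 0
    rw [hb0, map_zero]
  · intro t
    have hdb : HasDerivAt (fun t => br (a.1 1) (b.1 t)) (br (a.1 1) (deriv b.1 t)) t :=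
      ((br (a.1 1)).hasFDerivAt.comp_hasDerivAt t
        ((hb1.differentiable (by simp) t).hasDerivAt))
    have hder : deriv (brk br L1 ι d a b).1 t = br (a.1 1) (deriv b.1 t) := hdb.deriv
    rw [hder]
    show (br (a.1 1) (deriv b.1 t),
      L1 (a.1 1) (b.2 t) - ι (deriv b.1 t) (d (∫ s in (0:ℝ)..1, a.2 s))) ∈ D
    rw [← key (deriv b.1 t) (b.2 t) (deriv b.1 t)]
    -- the integrand is D-valued; integrate inside the closed submodule
    haveI : CompleteSpace D := hDcl.completeSpace_coe
    set F : ℝ → V × Ω1 := fun s =>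
      ((br (deriv a.1 s) (deriv b.1 t) : V),
       (L1 (deriv a.1 s) (b.2 t) - ι (deriv b.1 t) (d (a.2 s)) : Ω1)) with hF
    have hmem : ∀ s, F s ∈ D := fun s => hDor _ _ (haD s) (hbD t)
    have hcF : Continuous F := by
      apply Continuous.prodMk
      · exact ((br.flip (deriv b.1 t)).continuous).comp hda
      · exact (((L1.flip (b.2 t)).continuous).comp hda).sub
          ((((ι (deriv b.1 t)).comp d).continuous).comp hca2)
    set g : ℝ → D := fun s => ⟨F s, hmem s⟩ with hg
    have hcg : Continuous g := hcF.subtype_mk _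
    have := D.subtypeL.intervalIntegral_comp_comm (hcg.intervalIntegrable (μ := MeasureTheory.volume) 0 1)
    simp only [Submodule.coe_subtypeL', Submodule.coe_subtype, hg] at this
    rw [this]
    exact SetLike.coe_mem _
end
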